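/- Let k ≥ 2, q ≥ 3, and r > 2k be integers. There exists a constant C > 0 (depending only on k, q, r) such that for every z ∈ ℂ ∖ ℝ with |z| sufficiently large: |g(z)| ≤ C and |f(z) − sgn(Im z)·kπiz + (r − 2k)q·log z| ≤ C, where sgn(Im z) = 1 if Im z > 0 and −1 if Im z < 0. -/

import Mathlib

open Finset

/-- The principal branch of the square root: `√z = exp(log z / 2)`. -/
noncomputable def csqrt (z : ℂ) : ℂ := Complex.exp (Complex.log z / 2)

/-- The function `f(z)` of Definition 5.3. -/
noncomputable def fDef (k q r : ℕ) (z : ℂ) : ℂ :=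
  (k : ℂ) * (z + r + q) * Complex.log (z + (r : ℂ) + (q : ℂ)) +
    (k : ℂ) * ((q : ℂ) - z) * Complex.log ((q : ℂ) - z) +
    ((q : ℂ) + k) * z * Complex.log z -
    ((q : ℂ) + k) * (z + r) * Complex.log (z + (r : ℂ)) +
    (r : ℂ) * (q : ℂ) * (Real.log r : ℂ) +
    2 * (k : ℂ) * (q : ℂ) *
      ((∑ p ∈ Nat.primeFactors q, Real.log p / ((p : ℝ) - 1) : ℝ) : ℂ)

/-- The function `g(z)` of Definition 5.3. -/
noncomputable def gDef (k q r : ℕ) (z : ℂ) : ℂ :=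
  (2 * z + (r : ℂ)) ^ (1 - k % 2) / (csqrt z * csqrt (z + r)) *
    ((csqrt ((q : ℂ) - z) * csqrt (z + (r : ℂ) + (q : ℂ))) / (csqrt z * csqrt (z + r))) ^ k

/-!
Off the real axis a real translation keeps `z` in its open half-plane, so the arguments of
`z` and `z + a` differ by less than `π` and `log (z + a) = log z + log (1 + a / z)` holds
exactly; likewise `log (-z) = log z ∓ πi`. Substituting these into `f`, the `log z` terms
combine to `(2k - r) q log z`, the `∓πi` from `log (q - z)` produces `±kπiz`, and what is
left are constants and terms `(z + c) log (1 + c / z)`, each of size `O(|c|)`.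
For `g`, `|√w| = √|w|` and each of `z`, `z + r`, `q - z`, `z + r + q`, `2z + r` is comparable
to `|z|`, so every factor of `g` is bounded once `|z| ≫ r + q`.
-/

open Complex

namespace Complex

lemma arg_sub_arg_mem_Ioo {z w : ℂ} (h : 0 < z.im * w.im) :
    arg w - arg z ∈ Set.Ioo (-Real.pi) Real.pi := by
  rcases pos_and_pos_or_neg_and_neg_of_mul_pos h with ⟨hz, hw⟩ | ⟨hz, hw⟩
  · have := arg_nonneg_iff.2 hz.le; have := arg_nonneg_iff.2 hw.le
    have := arg_lt_pi_iff.2 (Or.inr hz.ne'); have := arg_lt_pi_iff.2 (Or.inr hw.ne')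
    constructor <;> linarith
  · have := arg_neg_iff.2 hz; have := arg_neg_iff.2 hw
    constructor <;> linarith [neg_pi_lt_arg z, neg_pi_lt_arg w]

lemma log_add_ofReal {z : ℂ} (hz : z.im ≠ 0) (a : ℝ) :
    log (z + a) = log z + log (1 + a / z) := by
  have hz0 : z ≠ 0 := fun h => hz (by simp [h])
  have hza : z + a ≠ 0 := fun h => hz (by simpa using congrArg im h)
  have hmul : z * (1 + a / z) = z + a := by field_simp
  have hw0 : 1 + a / z ≠ 0 := fun h => hza (by rw [← hmul, h, mul_zero])
  have hsub : arg (z + a) - arg z ∈ Set.Ioo (-Real.pi) Real.pi :=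
    arg_sub_arg_mem_Ioo (by simpa using mul_self_pos.2 hz)
  have hangle : (arg (1 + a / z) : Real.Angle) = ((arg (z + a) - arg z : ℝ) : Real.Angle) := by
    rw [Real.Angle.coe_sub, ← arg_div_coe_angle hza hz0, ← hmul, mul_div_cancel_left₀ _ hz0]
  have harg : arg (1 + a / z) = arg (z + a) - arg z := by
    rw [arg_coe_angle_eq_iff_eq_toReal.1 hangle,
      Real.Angle.toReal_coe_eq_self_iff.2 ⟨hsub.1, hsub.2.le⟩]
  rw [← hmul]
  refine log_mul hz0 hw0 ?_
  rw [harg, add_sub_cancel]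
  exact arg_mem_Ioc _

lemma log_neg_of_im_ne_zero {z : ℂ} (hz : z.im ≠ 0) :
    log (-z) = log z - (if 0 < z.im then (1 : ℂ) else -1) * Real.pi * I := by
  rcases hz.lt_or_gt with h | h
  · simp [Complex.ext_iff, log_re, log_im, arg_neg_eq_arg_add_pi_of_im_neg h, h.not_gt]
  · simp [Complex.ext_iff, log_re, log_im, arg_neg_eq_arg_sub_pi_of_im_pos h, h]

lemma norm_add_mul_log_one_add_div_le {z c : ℂ} (h : 2 * ‖c‖ ≤ ‖z‖) :
    ‖(z + c) * log (1 + c / z)‖ ≤ 3 * ‖c‖ := by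
  rcases eq_or_ne z 0 with rfl | hz0
  · simp
  have hz : 0 < ‖z‖ := norm_pos_iff.2 hz0
  have hcz : ‖c / z‖ ≤ 1 / 2 := by
    rw [norm_div, div_le_iff₀ hz]; linarith
  calc ‖(z + c) * log (1 + c / z)‖ ≤ (2 * ‖z‖) * (3 / 2 * (‖c‖ / ‖z‖)) := by
        rw [norm_mul, ← norm_div]
        gcongr
        · linarith [norm_add_le z c]
        · exact norm_log_one_add_half_le_self hcz
    _ = 3 * ‖c‖ := by field_simp

lemma norm_natCast_add (m n : ℕ) : ‖(m : ℂ) + n‖ = m + n := by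
  rw [← Nat.cast_add, norm_natCast, Nat.cast_add]

end Complex

lemma csqrt_mul_self {w : ℂ} (hw : w ≠ 0) : csqrt w * csqrt w = w := by
  rw [csqrt, ← Complex.exp_add, add_halves, Complex.exp_log hw]

lemma norm_csqrt {w : ℂ} (hw : w ≠ 0) : ‖csqrt w‖ = √‖w‖ := by
  rw [← Real.sqrt_mul_self (norm_nonneg (csqrt w)), ← norm_mul, csqrt_mul_self hw]

lemma norm_gDef_le (k q r : ℕ) {z : ℂ} (hR : 2 * ((r : ℝ) + q) + 1 ≤ ‖z‖) :
    ‖gDef k q r z‖ ≤ 5 * 3 ^ k := by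
  have hr : (0 : ℝ) ≤ r := r.cast_nonneg
  have hq : (0 : ℝ) ≤ q := q.cast_nonneg
  have hz_r : ‖z‖ ≤ ‖z + r‖ + r := by
    simpa using norm_add_le (z + r) (-(r : ℂ))
  have hz_qz : ‖z‖ ≤ q + ‖(q : ℂ) - z‖ := by
    simpa using norm_sub_le (q : ℂ) ((q : ℂ) - z)
  have hrq := norm_natCast_add r q
  have hz_rq : ‖z‖ ≤ ‖z + r + q‖ + (r + q) := by
    simpa [add_assoc, hrq] using norm_sub_le (z + r + q) ((r : ℂ) + q)
  have hqz : ‖(q : ℂ) - z‖ ≤ ‖z‖ + q := by simpa [add_comm] using norm_sub_le (q : ℂ) z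
  have hzrq : ‖z + r + q‖ ≤ ‖z‖ + (r + q) := by
    simpa [add_assoc, hrq] using norm_add_le z ((r : ℂ) + q)
  have h2zr : ‖2 * z + r‖ ≤ 2 * ‖z‖ + r := by simpa using norm_add_le (2 * z) (r : ℂ)
  set A := ‖z‖ * ‖z + r‖
  set N := ‖(q : ℂ) - z‖ * ‖z + r + q‖
  have hA : ‖z‖ ^ 2 / 2 ≤ A := by nlinarith
  have hN : N ≤ 4 * ‖z‖ ^ 2 := by
    unfold N; nlinarith [norm_nonneg ((q : ℂ) - z), norm_nonneg (z + r + q)]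
  have hApos : 0 < A := by nlinarith
  have hg : ‖gDef k q r z‖ = ‖2 * z + r‖ ^ (1 - k % 2) / √A * (√N / √A) ^ k := by
    simp only [gDef, norm_mul, norm_div, norm_pow, A, N, Real.sqrt_mul (norm_nonneg _),
      norm_csqrt (norm_pos_iff.1 (by linarith : 0 < ‖z‖)),
      norm_csqrt (norm_pos_iff.1 (by linarith : 0 < ‖z + r‖)),
      norm_csqrt (norm_pos_iff.1 (by linarith : 0 < ‖(q : ℂ) - z‖)),
      norm_csqrt (norm_pos_iff.1 (by linarith : 0 < ‖z + r + q‖))]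
  have hratio : √N / √A ≤ 3 := by
    rw [← Real.sqrt_div' _ hApos.le, Real.sqrt_le_left (by norm_num), div_le_iff₀ hApos]
    linarith
  have hfactor : ‖2 * z + r‖ ^ (1 - k % 2) / √A ≤ 5 := by
    have h3z : 1 ≤ 3 * ‖z‖ := by linarith
    have hsqrtA : 3 * ‖z‖ ≤ 5 * √A := by
      rw [← div_le_iff₀' (by norm_num)]
      exact Real.le_sqrt_of_sq_le (by nlinarith)
    rw [div_le_iff₀ (Real.sqrt_pos.2 hApos)]
    calc ‖2 * z + r‖ ^ (1 - k % 2) ≤ (3 * ‖z‖) ^ (1 - k % 2) := by gcongr; linarith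
      _ ≤ (3 * ‖z‖) ^ 1 := pow_le_pow_right₀ h3z (by omega)
      _ ≤ 5 * √A := by rwa [pow_one]
  rw [hg]
  gcongr

lemma exists_norm_fDef_sub_le (k q r : ℕ) :
    ∃ C : ℝ, ∀ z : ℂ, z.im ≠ 0 → 2 * ((r : ℝ) + q) ≤ ‖z‖ →
    ‖fDef k q r z - (if 0 < z.im then (1 : ℂ) else -1) * (k : ℂ) * (Real.pi : ℂ) * I * z
      + (((r : ℝ) - 2 * k : ℝ) : ℂ) * (q : ℂ) * log z‖ ≤ C := by
  set K : ℂ := (r : ℂ) * q * (Real.log r : ℂ) +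
    2 * k * q * ((∑ p ∈ Nat.primeFactors q, Real.log p / ((p : ℝ) - 1) : ℝ) : ℂ)
  refine ⟨k * (3 * (r + q)) + k * (3 * q) + (q + k) * (3 * r) + (Real.pi * k * q + ‖K‖),
    fun z hz hR => ?_⟩
  set s : ℂ := if 0 < z.im then 1 else -1
  have hs : ‖s‖ = 1 := by unfold s; split_ifs <;> simp
  have hlog_rq : log (z + r + q) = log z + log (1 + ((r : ℂ) + q) / z) := by
    simpa [add_assoc] using log_add_ofReal hz (r + q)
  have hlog_r : log (z + r) = log z + log (1 + (r : ℂ) / z) := by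
    simpa using log_add_ofReal hz r
  have hlog_q : log (q - z) = log z - s * Real.pi * I + log (1 + (q : ℂ) / -z) := by
    rw [← log_neg_of_im_ne_zero hz, ← neg_add_eq_sub]
    simpa using log_add_ofReal (z := -z) (by simpa using hz) q
  have hid : fDef k q r z - s * k * Real.pi * I * z + (((r : ℝ) - 2 * k : ℝ) : ℂ) * q * log z =
      k * ((z + ((r : ℂ) + q)) * log (1 + ((r : ℂ) + q) / z))
        + k * ((-z + q) * log (1 + (q : ℂ) / -z))
        - (q + k) * ((z + r) * log (1 + (r : ℂ) / z))
        + (-(s * Real.pi * I) * k * q + K) := by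
    simp only [fDef, hlog_rq, hlog_r, hlog_q, K]
    push_cast
    ring
  have hrq := norm_natCast_add r q
  have hqk := norm_natCast_add q k
  have hr : (0 : ℝ) ≤ r := r.cast_nonneg
  have hq : (0 : ℝ) ≤ q := q.cast_nonneg
  rw [hid]
  refine (norm_add_le _ _).trans (add_le_add ((norm_sub_le _ _).trans
    (add_le_add ((norm_add_le _ _).trans (add_le_add ?_ ?_)) ?_)) ?_)
  · rw [norm_mul, Complex.norm_natCast, ← hrq]
    gcongr
    exact norm_add_mul_log_one_add_div_le (by rw [hrq]; linarith)
  · rw [norm_mul, Complex.norm_natCast, ← Complex.norm_natCast q]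
    gcongr
    exact norm_add_mul_log_one_add_div_le (by rw [norm_neg, Complex.norm_natCast]; linarith)
  · rw [norm_mul, hqk, ← Complex.norm_natCast r]
    gcongr
    exact norm_add_mul_log_one_add_div_le (by rw [Complex.norm_natCast]; linarith)
  · refine (norm_add_le _ _).trans (add_le_add_left ?_ _)
    simp [hs, abs_of_pos Real.pi_pos]

theorem stmt_15_general (k q r : ℕ) :
    ∃ C : ℝ, 0 < C ∧ ∃ R₀ : ℝ, ∀ z : ℂ, z.im ≠ 0 → R₀ ≤ ‖z‖ →
      ‖gDef k q r z‖ ≤ C ∧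
      ‖fDef k q r z
          - (if 0 < z.im then (1 : ℂ) else -1) * (k : ℂ) * (Real.pi : ℂ) * Complex.I * z
          + (((r : ℝ) - 2 * k : ℝ) : ℂ) * (q : ℂ) * Complex.log z‖ ≤ C := by
  obtain ⟨Cf, hf⟩ := exists_norm_fDef_sub_le k q r
  refine ⟨max (5 * 3 ^ k) Cf, lt_max_of_lt_left (by positivity), 2 * ((r : ℝ) + q) + 1,
    fun z hz hR => ⟨?_, ?_⟩⟩
  · exact (norm_gDef_le k q r hR).trans (le_max_left _ _)
  · exact (hf z hz (by linarith)).trans (le_max_right _ _)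

theorem stmt_15 (k q r : ℕ) (hk : 2 ≤ k) (hq : 3 ≤ q) (hr : 2 * k < r) :
    ∃ C : ℝ, 0 < C ∧ ∃ R₀ : ℝ, ∀ z : ℂ, z.im ≠ 0 → R₀ ≤ ‖z‖ →
      ‖gDef k q r z‖ ≤ C ∧
      ‖fDef k q r z
          - (if 0 < z.im then (1 : ℂ) else -1) * (k : ℂ) * (Real.pi : ℂ) * Complex.I * z
          + (((r : ℝ) - 2 * k : ℝ) : ℂ) * (q : ℂ) * Complex.log z‖ ≤ C :=
  stmt_15_general k q r
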